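/- arXiv:2303.18180 — 4 statements merged into one kernel-verified Lean document; each statement's English description precedes it below -/
import Mathlib

section
/- If X ∈ ℝ^{q×r} has Hankel form, then P_q^T X P_r also has Hankel form, where P_n = (binom(j−1, i−1))_{i,j=1}^n is the Pascal matrix. Explicitly, the (i,j) entry of P_q^T X P_r equals the sum over k from 1 to i+j−1 of binom(i+j−2, k−1)·ξ_k, where X = (ξ_{i+j−1}). -/
/-! With `E` the shift `(E ξ) k = ξ (k + 1)` on sequences, the `j`-th column of the Pascal matrix
holds the coefficients of `(E + 1)^j`, so the `(i, j)` entry of `P_qᵀ X P_r` is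
`((E + 1)^i ((E + 1)^j ξ)) 0 = ((E + 1)^(i + j) ξ) 0`. Vandermonde's identity is thus the law
`(E + 1)^i (E + 1)^j = (E + 1)^(i + j)`. -/

open Matrix BigOperators

/-- Pascal matrix `P_n` with entries `binom(j−1, i−1)` (1-based). -/
def Pascal (n : ℕ) : Matrix (Fin n) (Fin n) ℝ :=
  Matrix.of fun i j => (Nat.choose (j : ℕ) (i : ℕ) : ℝ)

/-- `X` has Hankel form: entries depend only on `i + j`. -/
def IsHankel {q r : ℕ} (X : Matrix (Fin q) (Fin r) ℝ) : Prop :=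
  ∀ i i' : Fin q, ∀ j j' : Fin r,
    (i : ℕ) + (j : ℕ) = (i' : ℕ) + (j' : ℕ) → X i j = X i' j'

open Finset

section SeqShift

variable (R M : Type*) [Semiring R] [AddCommMonoid M] [Module R M]

def seqShift : Module.End R (ℕ → M) := LinearMap.funLeft R M Nat.succ

variable {R M}

theorem seqShift_pow_apply (k : ℕ) (g : ℕ → M) (m : ℕ) :
    (seqShift R M ^ k) g m = g (m + k) := by
  induction k generalizing g with
  | zero => rfl
  | succ k ih => rw [pow_succ, Module.End.mul_apply, ih]; rfl

theorem seqShift_add_one_pow_apply (n : ℕ) (g : ℕ → M) (m : ℕ) :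
    ((seqShift R M + 1) ^ n) g m = ∑ k ∈ range (n + 1), n.choose k • g (m + k) := by
  rw [(Commute.one_right (seqShift R M)).add_pow]
  simp [seqShift_pow_apply]

end SeqShift

theorem sum_fin_choose_mul_eq_seqShift_add_one_pow_apply {R : Type*} [Semiring R] {i n : ℕ}
    (hi : i < n) (g : ℕ → R) (m : ℕ) :
    ∑ a : Fin n, (i.choose a : R) * g (m + a) = ((seqShift R R + 1) ^ i) g m := by
  rw [Fin.sum_univ_eq_sum_range (fun a => (i.choose a : R) * g (m + a)),
    seqShift_add_one_pow_apply]
  refine (sum_subset (range_subset_range.2 hi) fun a _ ha => ?_).symm.trans ?_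
  · rw [Nat.choose_eq_zero_of_lt (by simpa using ha), Nat.cast_zero, zero_mul]
  · simp only [nsmul_eq_mul]

theorem pascal_transpose_mul_mul_apply {q r : ℕ} (X : Matrix (Fin q) (Fin r) ℝ) (i : Fin q)
    (j : Fin r) :
    ((Pascal q)ᵀ * X * Pascal r) i j =
      ∑ a : Fin q, ((i : ℕ).choose a : ℝ) *
        ∑ b : Fin r, ((j : ℕ).choose b : ℝ) * X a b := by
  simp only [mul_apply, transpose_apply, Pascal, of_apply, sum_mul, mul_sum]
  rw [sum_comm]
  exact sum_congr rfl fun a _ => sum_congr rfl fun b _ => by ring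

/-- Congruence with Pascal matrices preserves Hankel form, with the explicit
entry formula `(P_qᵀ X P_r)_{ij} = ∑_{k=1}^{i+j−1} binom(i+j−2, k−1) ξ_k` (1-based). -/
theorem stmt2 (q r : ℕ) (X : Matrix (Fin q) (Fin r) ℝ) (ξ : ℕ → ℝ)
    (hX : ∀ (i : Fin q) (j : Fin r), X i j = ξ ((i : ℕ) + (j : ℕ))) :
    IsHankel ((Pascal q)ᵀ * X * Pascal r) ∧
      ∀ (i : Fin q) (j : Fin r),
        ((Pascal q)ᵀ * X * Pascal r) i j =
          ∑ k ∈ Finset.range ((i : ℕ) + (j : ℕ) + 1),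
            (Nat.choose ((i : ℕ) + (j : ℕ)) k : ℝ) * ξ k := by
  have entry (i : Fin q) (j : Fin r) : ((Pascal q)ᵀ * X * Pascal r) i j =
      ∑ k ∈ range (i + j + 1), ((i + j : ℕ).choose k : ℝ) * ξ k := by
    let T (n : ℕ) := (seqShift ℝ ℝ + 1) ^ n
    calc ((Pascal q)ᵀ * X * Pascal r) i j
        = ∑ a : Fin q, ((i : ℕ).choose a : ℝ) * T j ξ a := by
          simp only [pascal_transpose_mul_mul_apply, hX,
            sum_fin_choose_mul_eq_seqShift_add_one_pow_apply j.isLt, T]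
      _ = T i (T j ξ) 0 := by
          simpa using sum_fin_choose_mul_eq_seqShift_add_one_pow_apply i.isLt (T j ξ) 0
      _ = T (i + j) ξ 0 := by
          rw [show T (i + j) = T i * T j from pow_add _ _ _, Module.End.mul_apply]
      _ = ∑ k ∈ range (i + j + 1), ((i + j : ℕ).choose k : ℝ) * ξ k := by
          simp [T, seqShift_add_one_pow_apply, nsmul_eq_mul]
  exact ⟨fun i i' j j' h => by rw [entry, entry, h], entry⟩
end

section
/- The Pascal matrix P_n with entries binom(j−1, i−1) equals the matrix exponential exp(Ẽ_n) of the nilpotent matrix Ẽ_n ∈ ℝ^{n×n} with entries (Ẽ_n)_{i,i+1} = i and zeros elsewhere. -/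
/-!
Left multiplication by `Ẽ_n` shifts rows up by one, scaling row `i` by `i + 1` (0-based).
Together with `(i + 1) · binom(j, i + 1) = (j - i) · binom(j, i)` this shows that `Ẽ_n ^ k`
is `k!` times the `k`-th superdiagonal of the Pascal matrix. Hence `Ẽ_n ^ n = 0`, the exponential
series stops after `n` terms, and these terms add up to `P_n`.
-/

open Matrix BigOperators

/-- The nilpotent matrix `Ẽ_n` with entries `(Ẽ_n)_{i,i+1} = i` (1-based). -/
def Etilde (n : ℕ) : Matrix (Fin n) (Fin n) ℝ :=
  Matrix.of fun i j => if (j : ℕ) = (i : ℕ) + 1 then ((i : ℕ) + 1 : ℝ) else 0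

open Nat in
theorem NormedSpace.exp_eq_sum_range_of_pow_eq_zero (𝕂 : Type*) {𝔸 : Type*} [Field 𝕂]
    [CharZero 𝕂] [Ring 𝔸] [Algebra 𝕂 𝔸] [TopologicalSpace 𝔸] [IsTopologicalRing 𝔸]
    {x : 𝔸} {n : ℕ} (hx : x ^ n = 0) :
    NormedSpace.exp x = ∑ k ∈ Finset.range n, (k !⁻¹ : 𝕂) • x ^ k := by
  rw [NormedSpace.exp_eq_tsum 𝕂]
  refine tsum_eq_sum fun k hk => ?_
  rw [pow_eq_zero_of_le (by simpa using hk) hx, smul_zero]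

theorem Etilde_mul_apply {n : ℕ} (A : Matrix (Fin n) (Fin n) ℝ) (i j : Fin n) :
    (Etilde n * A) i j =
      if h : (i : ℕ) + 1 < n then ((i : ℕ) + 1 : ℝ) * A ⟨i + 1, h⟩ j else 0 := by
  simp only [mul_apply, Etilde, of_apply, ite_mul, zero_mul]
  split_ifs with h
  · have hl (l : Fin n) : (l : ℕ) = i + 1 ↔ l = ⟨i + 1, h⟩ := by rw [Fin.ext_iff]
    simp only [hl, Finset.sum_ite_eq', Finset.mem_univ, if_true]
  · refine Finset.sum_eq_zero fun l _ => if_neg ?_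
    have := l.isLt
    omega

open Nat in
theorem Etilde_pow_apply (n k : ℕ) (i j : Fin n) :
    (Etilde n ^ k) i j = if (j : ℕ) = i + k then (k ! * (j : ℕ).choose i : ℝ) else 0 := by
  induction k generalizing i with
  | zero => simp +contextual [one_apply, Fin.ext_iff, eq_comm]
  | succ k ih =>
    rw [_root_.pow_succ', Etilde_mul_apply]
    split_ifs with hi hj hj
    · rw [ih, if_pos (by simp; omega)]
      have hchoose : ((j : ℕ).choose (i + 1) * (i + 1) : ℝ) = (j : ℕ).choose i * (k + 1) := by
        have := Nat.choose_succ_right_eq j i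
        rw [show (j : ℕ) - i = k + 1 by omega] at this
        exact_mod_cast this
      push_cast [Nat.factorial_succ]
      linear_combination (k ! : ℝ) * hchoose
    · rw [ih, if_neg (by simp; omega), mul_zero]
    · have := j.isLt
      omega
    · rfl

theorem Etilde_pow_self_eq_zero (n : ℕ) : Etilde n ^ n = 0 := by
  ext i j
  rw [Etilde_pow_apply, if_neg (by omega)]
  rfl

open Nat in
theorem Pascal_eq_sum_range (n : ℕ) :
    Pascal n = ∑ k ∈ Finset.range n, (k ! : ℝ)⁻¹ • Etilde n ^ k := by
  ext i j
  simp only [Pascal, of_apply, Matrix.sum_apply, Matrix.smul_apply, Etilde_pow_apply,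
    smul_eq_mul, mul_ite, mul_zero]
  rcases le_or_gt (i : ℕ) j with hij | hji
  · rw [Finset.sum_eq_single_of_mem ((j : ℕ) - i) (by simp; omega)]
    · rw [if_pos (by omega), inv_mul_cancel_left₀ (by positivity)]
    · intro k _ hk
      exact if_neg (by omega)
  · rw [Nat.choose_eq_zero_of_lt hji, Finset.sum_eq_zero fun k _ => if_neg (by omega)]
    simp

/-- `Ẽ_n` is nilpotent and the Pascal matrix is its matrix exponential
(a finite sum, by nilpotency). -/
theorem stmt5 (n : ℕ) :
    (Etilde n) ^ n = 0 ∧ Pascal n = NormedSpace.exp (Etilde n) ∧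
      Pascal n = ∑ k ∈ Finset.range n, ((Nat.factorial k : ℝ))⁻¹ • (Etilde n) ^ k := by
  have hsum := Pascal_eq_sum_range n
  refine ⟨Etilde_pow_self_eq_zero n, ?_, hsum⟩
  rw [hsum, NormedSpace.exp_eq_sum_range_of_pow_eq_zero ℝ (Etilde_pow_self_eq_zero n)]
end

section
/- If a matrix K_n ∈ ℝ^{s×s} satisfies the one-leg conditions (c^{l−1})^T K_n = 𝟙^T K_n C^{l−1} for l = 1,…,q, where C = diag(c_1,…,c_s), then for every k ∈ ℕ the matrix V_q^T K_n V_k has Hankel form. In fact, V_q^T K_n V_k = V_q^T D_K V_k where D_K is the diagonal matrix of the column sums of K_n. -/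
/-!
The one-leg conditions say exactly that `V_qᵀ K_n = V_qᵀ D_K`: the `(l, j)` entry of either side
is `(∑ i, K_n i j) c_j ^ l`. Hence `V_qᵀ K_n V_k = V_qᵀ D_K V_k`, whose `(a, b)` entry is the
moment `∑ j, (D_K)_j c_j ^ (a + b)`, which depends only on `a + b`.
-/

open Matrix BigOperators

/-- Vandermonde matrix `V_q = (𝟙, c, c², …, c^{q−1}) ∈ ℝ^{s×q}` (entrywise powers). -/
def Vand {s : ℕ} (c : Fin s → ℝ) (q : ℕ) : Matrix (Fin s) (Fin q) ℝ :=
  Matrix.of fun i j => c i ^ (j : ℕ)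

theorem isHankel_of_apply_eq {q r : ℕ} {X : Matrix (Fin q) (Fin r) ℝ} (f : ℕ → ℝ)
    (hX : ∀ i j, X i j = f (i + j)) : IsHankel X := by
  intro i i' j j' h
  rw [hX, hX, h]

section Vand

variable {s : ℕ} (c : Fin s → ℝ)

theorem transpose_vand_mul_diagonal_mul_vand_apply {q k : ℕ} (d : Fin s → ℝ)
    (a : Fin q) (b : Fin k) :
    ((Vand c q)ᵀ * diagonal d * Vand c k) a b = ∑ j, d j * c j ^ ((a : ℕ) + b) := by
  rw [mul_apply]
  simp only [mul_diagonal, transpose_apply, Vand, of_apply, pow_add]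
  exact Finset.sum_congr rfl fun j _ => by ring

theorem isHankel_transpose_vand_mul_diagonal_mul_vand (q k : ℕ) (d : Fin s → ℝ) :
    IsHankel ((Vand c q)ᵀ * diagonal d * Vand c k) :=
  isHankel_of_apply_eq (fun n => ∑ j, d j * c j ^ n)
    (transpose_vand_mul_diagonal_mul_vand_apply c d)

theorem transpose_vand_mul_eq_mul_diagonal {q : ℕ} (K : Matrix (Fin s) (Fin s) ℝ)
    (hK : ∀ l : ℕ, l < q → ∀ j : Fin s, ∑ i, c i ^ l * K i j = (∑ i, K i j) * c j ^ l) :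
    (Vand c q)ᵀ * K = (Vand c q)ᵀ * diagonal (fun j => ∑ i, K i j) := by
  ext l j
  rw [mul_diagonal, mul_apply]
  simp only [transpose_apply, Vand, of_apply]
  rw [hK l l.isLt j, mul_comm]

end Vand

/-- If `K_n` satisfies the one-leg conditions `(c^{l−1})ᵀ K_n = 𝟙ᵀ K_n C^{l−1}`,
`l = 1, …, q`, then `V_qᵀ K_n V_k` has Hankel form for every `k`, and in fact equals
`V_qᵀ D_K V_k` where `D_K` is the diagonal matrix of the column sums of `K_n`. -/
theorem stmt6 (s q : ℕ) (c : Fin s → ℝ) (Kn : Matrix (Fin s) (Fin s) ℝ)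
    (holeg : ∀ l : ℕ, l < q → ∀ j : Fin s,
      ∑ i, c i ^ l * Kn i j = (∑ i, Kn i j) * c j ^ l) :
    ∀ k : ℕ,
      IsHankel ((Vand c q)ᵀ * Kn * Vand c k) ∧
      (Vand c q)ᵀ * Kn * Vand c k =
        (Vand c q)ᵀ * Matrix.diagonal (fun j => ∑ i, Kn i j) * Vand c k := by
  intro k
  rw [transpose_vand_mul_eq_mul_diagonal c Kn holeg]
  exact ⟨isHankel_transpose_vand_mul_diagonal_mul_vand c q k _, rfl⟩
end

section
/- Let p ∈ C^q([0,T], ℝ^m) and suppose K ∈ ℝ^{s×s} satisfies (c^{l−1})^T K = 𝟙^T K C^{l−1} for l = 1,…,q, where C = diag(c_i). Then for any t ∈ [0,T] with t + c_i h ∈ [0,T] for all i, Σ_{i=1}^s K_{ij} p(t + c_i h) − (𝟙^T K e_j) p(t + c_j h) = O(h^q) as h → 0, for each j = 1,…,s, with constant bounded by a multiple of the sup norm of the q-th derivative of p. -/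
/-!
Let `P` be the Taylor polynomial of degree `q - 1` of `p` at `t` (`P = 0` if `q = 0`). The
one-leg conditions say exactly that the functional
`g ↦ ∑ᵢ K i j • g (t + cᵢ h) - (∑ᵢ K i j) • g (t + c_j h)` kills every monomial `(x - t) ^ l`
with `l < q`, so it kills `P`, and applied to `p` it only sees the remainders `p - P`. Each
remainder is at most `sup ‖p⁽q⁾‖ * |cᵢ h| ^ q`, by the mean value theorem applied to the Taylor
polynomial as a function of its base point.
-/

open Set
open scoped Nat

theorem norm_le_iSup_of_continuousOn {X E : Type*} [TopologicalSpace X]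
    [SeminormedAddCommGroup E] {g : X → E} {S : Set X}
    (hS : IsCompact S) (hg : ContinuousOn g S) {x : X} (hx : x ∈ S) :
    ‖g x‖ ≤ ⨆ y : S, ‖g y‖ := by
  obtain ⟨C, hC⟩ := hS.exists_bound_of_continuousOn hg
  exact le_ciSup (f := fun y : S => ‖g y‖) ⟨C, by rintro _ ⟨y, rfl⟩; exact hC y y.2⟩
    ⟨x, hx⟩

section

variable {E : Type*} [NormedAddCommGroup E] [NormedSpace ℝ E] {ι : Type*} [Fintype ι]

theorem norm_sub_taylorWithinEval_Icc_le {f : ℝ → E} {a b M : ℝ} {n : ℕ} (hab : a < b)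
    (hf : ContDiffOn ℝ (n + 1 : ℕ) f (Icc a b))
    (hM : ∀ y ∈ Icc a b, ‖iteratedDerivWithin (n + 1) f (Icc a b) y‖ ≤ M)
    {t x : ℝ} (ht : t ∈ Icc a b) (hx : x ∈ Icc a b) :
    ‖f x - taylorWithinEval f n (Icc a b) t x‖ ≤ M * |x - t| ^ (n + 1) := by
  have hsub : uIcc t x ⊆ Icc a b := uIcc_subset_Icc ht hx
  have hderiv : ∀ y ∈ uIcc t x,
      HasDerivWithinAt (fun y => taylorWithinEval f n (Icc a b) y x)
        (((n ! : ℝ)⁻¹ * (x - y) ^ n) • iteratedDerivWithin (n + 1) f (Icc a b) y) (uIcc t x) y :=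
    fun y hy => (hasDerivWithinAt_taylorWithinEval_at_Icc x hab (hsub hy)
      (hf.of_le (by norm_cast; omega))
      (hf.differentiableOn_iteratedDerivWithin (by norm_cast; omega)
        (uniqueDiffOn_Icc hab))).mono hsub
  have hbound : ∀ y ∈ uIcc t x,
      ‖((n ! : ℝ)⁻¹ * (x - y) ^ n) • iteratedDerivWithin (n + 1) f (Icc a b) y‖ ≤
        M * |x - t| ^ n := by
    intro y hy
    have hfact : (n ! : ℝ)⁻¹ ≤ 1 :=
      inv_le_one_of_one_le₀ (by exact_mod_cast n.factorial_pos)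
    rw [norm_smul, norm_mul, norm_inv, norm_pow, Real.norm_natCast, Real.norm_eq_abs]
    calc (n ! : ℝ)⁻¹ * |x - y| ^ n * ‖iteratedDerivWithin (n + 1) f (Icc a b) y‖
        ≤ 1 * |x - t| ^ n * M := by
          gcongr ?_ * ?_ ^ n * ?_
          · exact abs_sub_right_of_mem_uIcc hy
          · exact hM y (hsub hy)
      _ = M * |x - t| ^ n := by ring
  have := (convex_uIcc t x).norm_image_sub_le_of_norm_hasDerivWithin_le hderiv hbound
    left_mem_uIcc right_mem_uIcc
  rw [taylorWithinEval_self, Real.norm_eq_abs] at this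
  rwa [pow_succ, ← mul_assoc]

theorem sum_smul_taylorWithinEval_eq (f : ℝ → E) (n : ℕ) (S : Set ℝ) (w c : ι → ℝ) (j : ι) (t h : ℝ)
    (hmoment : ∀ k ≤ n, ∑ i, c i ^ k * w i = (∑ i, w i) * c j ^ k) :
    ∑ i, w i • taylorWithinEval f n S t (t + c i * h) =
      (∑ i, w i) • taylorWithinEval f n S t (t + c j * h) := by
  simp only [taylor_within_apply, add_sub_cancel_left, Finset.smul_sum, smul_smul]
  rw [Finset.sum_comm]
  refine Finset.sum_congr rfl fun k hk => ?_
  rw [← Finset.sum_smul]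
  congr 1
  calc ∑ i, w i * ((k ! : ℝ)⁻¹ * (c i * h) ^ k)
      = (∑ i, c i ^ k * w i) * ((k ! : ℝ)⁻¹ * h ^ k) := by
        rw [Finset.sum_mul]
        exact Finset.sum_congr rfl fun i _ => by ring
    _ = (∑ i, w i) * ((k ! : ℝ)⁻¹ * (c j * h) ^ k) := by
        rw [hmoment k (Finset.mem_range_succ_iff.mp hk)]
        ring

theorem norm_sum_smul_sub_smul_le (f P : ℝ → E) (w c : ι → ℝ) (j : ι) {t h M : ℝ} {q : ℕ}
    (hh : 0 ≤ h)
    (hP : ∑ i, w i • P (t + c i * h) = (∑ i, w i) • P (t + c j * h))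
    (hfP : ∀ i, ‖f (t + c i * h) - P (t + c i * h)‖ ≤ M * |c i * h| ^ q) :
    ‖∑ i, w i • f (t + c i * h) - (∑ i, w i) • f (t + c j * h)‖ ≤
      (∑ i, |w i| * |c i| ^ q + |∑ i, w i| * |c j| ^ q) * M * h ^ q := by
  have hnorm : ∀ (a : ℝ) i, ‖a • (f (t + c i * h) - P (t + c i * h))‖ ≤
      |a| * |c i| ^ q * M * h ^ q := fun a i => by
    rw [norm_smul, Real.norm_eq_abs]
    calc |a| * ‖f (t + c i * h) - P (t + c i * h)‖ ≤ |a| * (M * |c i * h| ^ q) := by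
          gcongr
          exact hfP i
      _ = |a| * |c i| ^ q * M * h ^ q := by rw [abs_mul, abs_of_nonneg hh]; ring
  have hsplit : ∑ i, w i • f (t + c i * h) - (∑ i, w i) • f (t + c j * h) =
      ∑ i, w i • (f (t + c i * h) - P (t + c i * h)) -
        (∑ i, w i) • (f (t + c j * h) - P (t + c j * h)) := by
    simp only [smul_sub, Finset.sum_sub_distrib, hP]
    abel
  rw [hsplit]
  calc _ ≤ ∑ i, ‖w i • (f (t + c i * h) - P (t + c i * h))‖ +
        ‖(∑ i, w i) • (f (t + c j * h) - P (t + c j * h))‖ :=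
        (norm_sub_le _ _).trans (add_le_add_left (norm_sum_le _ _) _)
    _ ≤ ∑ i, |w i| * |c i| ^ q * M * h ^ q + |∑ i, w i| * |c j| ^ q * M * h ^ q :=
        add_le_add (Finset.sum_le_sum fun i _ => hnorm _ i) (hnorm _ j)
    _ = _ := by simp only [Finset.sum_mul, add_mul]

end

/-- Estimate (FeKP) of Lemma 4.1: if `p ∈ C^q([0,T], ℝ^m)` and `K` satisfies the
one-leg conditions `(c^{l−1})ᵀ K = 𝟙ᵀ K C^{l−1}` for `l = 1,…,q`, then
`Σᵢ K_{ij} p(t + cᵢh) − (𝟙ᵀ K e_j) p(t + c_jh) = O(h^q)`, with constant bounded by a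
multiple of the sup norm of the `q`-th derivative of `p`. -/
theorem stmt17 (s q m : ℕ) (T : ℝ) (hT : 0 < T) (c : Fin s → ℝ)
    (K : Matrix (Fin s) (Fin s) ℝ)
    (holeg : ∀ l : ℕ, l < q → ∀ j : Fin s,
      ∑ i, c i ^ l * K i j = (∑ i, K i j) * c j ^ l)
    (p : ℝ → EuclideanSpace ℝ (Fin m))
    (hp : ContDiffOn ℝ q p (Set.Icc 0 T)) :
    ∃ Cb : ℝ, 0 ≤ Cb ∧
      ∀ h : ℝ, 0 < h → ∀ t ∈ Set.Icc (0 : ℝ) T,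
        (∀ i : Fin s, t + c i * h ∈ Set.Icc (0 : ℝ) T) →
        ∀ j : Fin s,
          ‖(∑ i, K i j • p (t + c i * h)) - (∑ i, K i j) • p (t + c j * h)‖ ≤
            Cb * (⨆ x : Set.Icc (0 : ℝ) T,
              ‖iteratedDerivWithin q p (Set.Icc (0 : ℝ) T) x‖) * h ^ q := by
  have hM : ∀ x ∈ Icc 0 T, ‖iteratedDerivWithin q p (Icc 0 T) x‖ ≤
      ⨆ y : Icc (0 : ℝ) T, ‖iteratedDerivWithin q p (Icc 0 T) y‖ := fun x hx =>
    norm_le_iSup_of_continuousOn isCompact_Icc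
      (hp.continuousOn_iteratedDerivWithin le_rfl (uniqueDiffOn_Icc hT)) hx
  set C : Fin s → ℝ := fun j => ∑ i, |K i j| * |c i| ^ q + |∑ i, K i j| * |c j| ^ q
  refine ⟨∑ j, C j, by positivity, fun h hh t ht hc j => ?_⟩
  have hM0 := (norm_nonneg _).trans (hM t ht)
  calc _ ≤ C j * (⨆ y : Icc (0 : ℝ) T, ‖iteratedDerivWithin q p (Icc 0 T) y‖) * h ^ q := ?_
    _ ≤ _ := by
        gcongr
        exact Finset.single_le_sum (fun _ _ => by positivity) (Finset.mem_univ j)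
  cases q with
  | zero =>
    exact norm_sum_smul_sub_smul_le p 0 _ c j hh.le (by simp)
      fun i => by simpa using hM _ (hc i)
  | succ n =>
    refine norm_sum_smul_sub_smul_le p (taylorWithinEval p n (Icc 0 T) t) _ c j hh.le
      (sum_smul_taylorWithinEval_eq p n _ _ c j t h fun k hk => holeg k (by omega) j)
      fun i => ?_
    simpa using norm_sub_taylorWithinEval_Icc_le hT hp hM ht (hc i)
end
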